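/- arXiv:2102.06910 — 2 statements merged into one kernel-verified Lean document; each statement's English description precedes it below -/
import Mathlib

section
/- For c₁ = ε_r/(2L), c₂ = ε_t/(2L), S = S_T + S_R, the solution of S_R·c₁/(1 + c₁Λ) = S_R·c₂/(1 + c₂(1 − S_RΛ)/S_T) in Λ is Λ = L·(2S_T/S)·(1/ε_t − 1/ε_r) + 1/S. -/
theorem stmt_15 (εt εr L : ℝ) (hεt : 0 < εt) (hεr : 0 < εr) (hL : 0 < L)
    (S_T S_R : ℕ) (hT : 1 ≤ S_T) (hR : 1 ≤ S_R) (S : ℕ) (hS : S = S_T + S_R)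
    (c₁ c₂ : ℝ) (hc₁ : c₁ = εr / (2 * L)) (hc₂ : c₂ = εt / (2 * L))
    (Λ : ℝ) (hd₁ : 0 < 1 + c₁ * Λ) (hd₂ : 0 < 1 + c₂ * (1 - S_R * Λ) / S_T)
    (heq : (S_R : ℝ) * c₁ / (1 + c₁ * Λ) =
      (S_R : ℝ) * c₂ / (1 + c₂ * (1 - S_R * Λ) / S_T)) :
    Λ = L * (2 * S_T / S) * (1 / εt - 1 / εr) + 1 / S := by
  have hT' : (0:ℝ) < S_T := by exact_mod_cast hT
  have hR' : (0:ℝ) < S_R := by exact_mod_cast hR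
  have hS' : (0:ℝ) < S := by
    have : 1 ≤ S := by omega
    exact_mod_cast this
  have hSc : (S:ℝ) = S_T + S_R := by exact_mod_cast hS
  subst hc₁ hc₂
  have hpoly : (S_R : ℝ) * (εr / (2 * L)) *
      (1 + (εt / (2 * L)) * (1 - S_R * Λ) / S_T) =
      (S_R : ℝ) * (εt / (2 * L)) * (1 + (εr / (2 * L)) * Λ) := by
    rw [div_eq_div_iff (ne_of_gt hd₁) (ne_of_gt hd₂)] at heq
    linarith [heq]
  have key : εr * (2 * L * S_T + εt * (1 - S_R * Λ)) =
      εt * S_T * (2 * L + εr * Λ) := by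
    have h2L : (2 * L) ≠ 0 := by positivity
    have hTne : (S_T:ℝ) ≠ 0 := ne_of_gt hT'
    have hRne : (S_R:ℝ) ≠ 0 := ne_of_gt hR'
    field_simp at hpoly
    have hc : ((S_R:ℝ) * (2 * L) * (2 * L)) ≠ 0 := by positivity
    apply mul_right_cancel₀ hc
    linear_combination ((S_R:ℝ) * (2 * L) * (2 * L)) * hpoly
  field_simp
  rw [hSc]
  nlinarith [key, mul_pos hεt hεr]
end

section
/- Let S_T, S_R ≥ 1, S = S_T + S_R, ε_t > 0, and L = E₀/(M·N) for a constant E₀ > 0 and RIS size M·N. Then S·log₂(ε_t/(2LS)) > S_T·log₂(ε_t/(L·S_T)) if and only if M·N > E₀·2^{E_T}, where E_T = (S − S_R·log₂ ε_t + S·log₂ S − S_T·log₂ S_T)/S_R. -/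
theorem stmt_18 (S_T S_R : ℕ) (hT : 1 ≤ S_T) (hR : 1 ≤ S_R) (S : ℕ) (hS : S = S_T + S_R)
    (εt E₀ MN : ℝ) (hεt : 0 < εt) (hE₀ : 0 < E₀) (hMN : 0 < MN)
    (L : ℝ) (hL : L = E₀ / MN)
    (E_T : ℝ)
    (hET : E_T = ((S : ℝ) - S_R * Real.logb 2 εt + S * Real.logb 2 S -
      S_T * Real.logb 2 S_T) / S_R) :
    (S : ℝ) * Real.logb 2 (εt / (2 * L * S)) > (S_T : ℝ) * Real.logb 2 (εt / (L * S_T)) ↔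
      MN > E₀ * 2 ^ E_T := by
  have hb : (1:ℝ) < 2 := one_lt_two
  have hL0 : 0 < L := hL ▸ div_pos hE₀ hMN
  have hT0 : (0:ℝ) < S_T := by exact_mod_cast hT
  have hR0 : (0:ℝ) < S_R := by exact_mod_cast hR
  have hS0 : (0:ℝ) < S := by rw [hS]; push_cast; linarith
  -- RHS ↔ logb 2 L < -E_T
  have hrhs : MN > E₀ * 2 ^ E_T ↔ Real.logb 2 L < -E_T := by
    rw [Real.logb_lt_iff_lt_rpow hb hL0, hL, Real.rpow_neg (by norm_num),
      div_lt_iff₀ hMN, inv_mul_eq_div, lt_div_iff₀ (Real.rpow_pos_of_pos two_pos E_T),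
      gt_iff_lt]
  rw [hrhs]
  -- expand logs on LHS
  have h2L : (0:ℝ) < 2 * L := by linarith
  rw [Real.logb_div (by positivity) (by positivity),
    Real.logb_div (by positivity) (by positivity),
    Real.logb_mul (ne_of_gt h2L) (ne_of_gt hS0),
    Real.logb_mul (by norm_num) (ne_of_gt hL0),
    Real.logb_mul (ne_of_gt hL0) (ne_of_gt hT0),
    Real.logb_self_eq_one hb]
  have hScast : (S:ℝ) = S_T + S_R := by rw [hS]; push_cast; ring
  rw [hET, ← neg_div, lt_div_iff₀ hR0]
  constructor
  · intro h; rw [hScast] at h ⊢; ring_nf at h ⊢; linarith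
  · intro h; rw [hScast] at h ⊢; ring_nf at h ⊢; linarith
end
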